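/- Let u be a positive continuous solution of the integral equation (IE). Then for every x ∈ ℝⁿ, every λ > 0, and every ξ ∈ ℝⁿ with |ξ − x| > λ, one has u(ξ) − u_{x,λ}(ξ) = γ ∫_{|z−x| ≥ λ} K(x,λ;ξ,z) · G(z) dz, where G(z) := ε (2/(1+|z|²))^{2s} u(z) + (2/(1+|z|²))^{σ} u(z)^{α} − ε (2λ²/(1 + |z^{x,λ}|²))^{2s} |z − x|^{−4s} u_{x,λ}(z) − (2λ²/(1 + |z^{x,λ}|²))^{σ} |z − x|^{−2σ} u_{x,λ}(z)^{α}, and the integrand is Lebesgue integrable on {z : |z − x| ≥ λ}. -/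

import Mathlib

/-! Split the representation integral of `u(p)` into the exterior `{|z - x| ≥ λ}` and the ball
`B(x, λ)`. Inversion in the sphere maps the exterior onto the punctured ball with Jacobian
`(λ / |z - x|)^{2n}`, so `u(p)` becomes an integral over the exterior alone. Taking `p = ξ` and
`p = ξ^{x,λ}`, the similar-triangle identities of the inversion,
`|ξ - z^{x,λ}| = |ξ - x| |ξ^{x,λ} - z| / |z - x|` and
`|ξ^{x,λ} - z^{x,λ}| = λ² |ξ - z| / (|ξ - x| |z - x|)`, collect the difference into
`K(x,λ;ξ,z) (F(z) - (λ / |z - x|)^{n+2s} F(z^{x,λ}))`, and the choice of `σ` makes the second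
factor equal to `G(z)`. -/

open MeasureTheory

/-- Inversion of `ξ` in the sphere of radius `l` centered at `x`. -/
noncomputable def sphereInversion {n : ℕ} (x : EuclideanSpace ℝ (Fin n)) (l : ℝ)
    (ξ : EuclideanSpace ℝ (Fin n)) : EuclideanSpace ℝ (Fin n) :=
  x + (l ^ 2 / ‖ξ - x‖ ^ 2) • (ξ - x)

/-- The Kelvin transform `u_{x,λ}` of `u` (with exponent `n − 2s`). -/
noncomputable def kelvin {n : ℕ} (s : ℝ) (u : EuclideanSpace ℝ (Fin n) → ℝ)
    (x : EuclideanSpace ℝ (Fin n)) (l : ℝ) (ξ : EuclideanSpace ℝ (Fin n)) : ℝ :=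
  (l / ‖ξ - x‖) ^ ((n : ℝ) - 2 * s) * u (sphereInversion x l ξ)

/-- The moving-spheres kernel `K(x,λ;ξ,z)`. -/
noncomputable def msKernel {n : ℕ} (s : ℝ) (x : EuclideanSpace ℝ (Fin n)) (l : ℝ)
    (ξ z : EuclideanSpace ℝ (Fin n)) : ℝ :=
  ‖ξ - z‖ ^ (-((n : ℝ) - 2 * s))
    - (l / ‖ξ - x‖) ^ ((n : ℝ) - 2 * s) * ‖sphereInversion x l ξ - z‖ ^ (-((n : ℝ) - 2 * s))

/-- The nonlinearity `F_{ε,u}(y) = ε (2/(1+|y|²))^{2s} u(y) + (2/(1+|y|²))^{σ} u(y)^{α}`. -/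
noncomputable def ieF {n : ℕ} (s σ α ε : ℝ) (u : EuclideanSpace ℝ (Fin n) → ℝ)
    (y : EuclideanSpace ℝ (Fin n)) : ℝ :=
  ε * (2 / (1 + ‖y‖ ^ 2)) ^ (2 * s) * u y + (2 / (1 + ‖y‖ ^ 2)) ^ σ * u y ^ α

/-- `u` is a positive continuous solution of the integral equation (IE). -/
def IsIESolution {n : ℕ} (s σ α ε γ : ℝ) (u : EuclideanSpace ℝ (Fin n) → ℝ) : Prop :=
  Continuous u ∧ (∀ y, 0 < u y) ∧
    ∀ x : EuclideanSpace ℝ (Fin n),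
      Integrable (fun y => ‖x - y‖ ^ (2 * s - (n : ℝ)) * ieF s σ α ε u y) ∧
      u x = γ * ∫ y, ‖x - y‖ ^ (2 * s - (n : ℝ)) * ieF s σ α ε u y

/-- The difference term `G(z)` in Lemma on `u − u_{x,λ}`. -/
noncomputable def ieG {n : ℕ} (s σ α ε : ℝ) (u : EuclideanSpace ℝ (Fin n) → ℝ)
    (x : EuclideanSpace ℝ (Fin n)) (l : ℝ) (z : EuclideanSpace ℝ (Fin n)) : ℝ :=
  ε * (2 / (1 + ‖z‖ ^ 2)) ^ (2 * s) * u z + (2 / (1 + ‖z‖ ^ 2)) ^ σ * u z ^ α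
    - ε * (2 * l ^ 2 / (1 + ‖sphereInversion x l z‖ ^ 2)) ^ (2 * s)
        * ‖z - x‖ ^ (-(4 * s)) * kelvin s u x l z
    - (2 * l ^ 2 / (1 + ‖sphereInversion x l z‖ ^ 2)) ^ σ
        * ‖z - x‖ ^ (-(2 * σ)) * kelvin s u x l z ^ α

open Metric Set EuclideanGeometry Module

section Inversion

variable {E : Type*} [NormedAddCommGroup E]

theorem measurableSet_setOf_le_norm_sub [MeasurableSpace E] [OpensMeasurableSpace E]
    (c : E) (R : ℝ) : MeasurableSet {w : E | R ≤ ‖w - c‖} :=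
  (isClosed_le continuous_const (by fun_prop)).measurableSet

theorem compl_setOf_le_norm_sub (c : E) (R : ℝ) : {w | R ≤ ‖w - c‖}ᶜ = ball c R := by
  ext w
  simp [dist_eq_norm]

variable [InnerProductSpace ℝ E]

theorem image_inversion_setOf_le_norm_sub {c : E} {R : ℝ} (hR : 0 < R) :
    inversion c R '' {w | R ≤ ‖w - c‖} = closedBall c R \ {c} := by
  ext z
  simp only [mem_image, mem_ofPred_eq, mem_sdiff, mem_closedBall, mem_singleton_iff,
    ← dist_eq_norm]
  constructor
  · rintro ⟨w, hw, rfl⟩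
    have hw0 : 0 < dist w c := hR.trans_le hw
    refine ⟨?_, fun h => ?_⟩
    · rw [dist_inversion_center, div_le_iff₀ hw0, sq]
      exact mul_le_mul_of_nonneg_left hw hR.le
    · rw [inversion_eq_center hR.ne'] at h
      simp [h] at hw0
  · rintro ⟨hz, hzc⟩
    refine ⟨inversion c R z, ?_, inversion_inversion c hR.ne' z⟩
    rw [dist_inversion_center, le_div_iff₀ (dist_pos.2 hzc), sq]
    exact mul_le_mul_of_nonneg_left hz hR.le

noncomputable def inversionFold (c : E) (R : ℝ) (g : E → ℝ) (w : E) : ℝ :=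
  g w + (R / ‖w - c‖) ^ (2 * finrank ℝ E) * g (inversion c R w)

variable [FiniteDimensional ℝ E]

theorem abs_det_smul_reflection (a : ℝ) (K : Submodule ℝ E) [K.HasOrthogonalProjection] :
    |(a • (K.reflection : E →L[ℝ] E)).det| = |a| ^ finrank ℝ E := by
  have hK : LinearMap.det (K.reflection : E →L[ℝ] E).toLinearMap = (-1) ^ finrank ℝ Kᗮ :=
    K.det_reflection
  rw [ContinuousLinearMap.det, ContinuousLinearMap.toLinearMap_smul, LinearMap.det_smul, abs_mul,
    hK]
  simp

theorem abs_det_fderiv_inversion (c w : E) (R : ℝ) :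
    |((R / dist w c) ^ 2 • ((ℝ ∙ (w - c))ᗮ.reflection : E →L[ℝ] E)).det|
      = (R / ‖w - c‖) ^ (2 * finrank ℝ E) := by
  rw [abs_det_smul_reflection, abs_sq, dist_eq_norm, pow_mul]

variable [MeasurableSpace E] [BorelSpace E] (μ : Measure E) [μ.IsAddHaarMeasure]

theorem ball_ae_eq_closedBall_sdiff_center [Nontrivial E] (c : E) (R : ℝ) :
    ball c R =ᵐ[μ] (closedBall c R \ {c} : Set E) := by
  refine ae_eq_set.2 ⟨measure_mono_null ?_ (measure_singleton c),
    measure_mono_null ?_ (Measure.addHaar_sphere μ c R)⟩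
  · intro z ⟨hz, hz'⟩
    by_contra h
    exact hz' ⟨ball_subset_closedBall hz, h⟩
  · intro z ⟨⟨hz, _⟩, hz'⟩
    exact mem_sphere.2 (le_antisymm (mem_closedBall.1 hz) (not_lt.1 hz'))

theorem integrableOn_ball_iff_inversion [Nontrivial E] {c : E} {R : ℝ} (hR : 0 < R)
    (g : E → ℝ) :
    IntegrableOn g (ball c R) μ ↔ IntegrableOn
      (fun w => (R / ‖w - c‖) ^ (2 * finrank ℝ E) * g (inversion c R w)) {w | R ≤ ‖w - c‖} μ := by
  have hA := measurableSet_setOf_le_norm_sub c R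
  rw [IntegrableOn, Measure.restrict_congr_set (ball_ae_eq_closedBall_sdiff_center μ c R),
    ← image_inversion_setOf_le_norm_sub hR, ← IntegrableOn,
    integrableOn_image_iff_integrableOn_abs_det_fderiv_smul μ hA
      (fun w hw => (hasFDerivAt_inversion (norm_sub_pos_iff.1 (hR.trans_le hw))).hasFDerivWithinAt)
      (inversion_injective c hR.ne').injOn g]
  exact integrableOn_congr_fun (fun w _ => by rw [abs_det_fderiv_inversion, smul_eq_mul]) hA

theorem setIntegral_ball_eq_inversion [Nontrivial E] {c : E} {R : ℝ} (hR : 0 < R)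
    (g : E → ℝ) :
    ∫ z in ball c R, g z ∂μ
      = ∫ w in {w | R ≤ ‖w - c‖}, (R / ‖w - c‖) ^ (2 * finrank ℝ E) * g (inversion c R w) ∂μ := by
  have hA := measurableSet_setOf_le_norm_sub c R
  rw [setIntegral_congr_set (ball_ae_eq_closedBall_sdiff_center μ c R),
    ← image_inversion_setOf_le_norm_sub hR,
    integral_image_eq_integral_abs_det_fderiv_smul μ hA
      (fun w hw => (hasFDerivAt_inversion (norm_sub_pos_iff.1 (hR.trans_le hw))).hasFDerivWithinAt)
      (inversion_injective c hR.ne').injOn g]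
  exact setIntegral_congr_fun hA (fun w _ => by rw [abs_det_fderiv_inversion, smul_eq_mul])

theorem integrableOn_inversionFold [Nontrivial E] {c : E} {R : ℝ} (hR : 0 < R) {g : E → ℝ}
    (hg : Integrable g μ) : IntegrableOn (inversionFold c R g) {w | R ≤ ‖w - c‖} μ :=
  hg.integrableOn.add ((integrableOn_ball_iff_inversion μ hR g).1 hg.integrableOn)

theorem integral_eq_setIntegral_inversionFold [Nontrivial E] {c : E} {R : ℝ} (hR : 0 < R)
    {g : E → ℝ} (hg : Integrable g μ) :
    ∫ z, g z ∂μ = ∫ w in {w | R ≤ ‖w - c‖}, inversionFold c R g w ∂μ := by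
  rw [← integral_add_compl (measurableSet_setOf_le_norm_sub c R) hg, compl_setOf_le_norm_sub,
    setIntegral_ball_eq_inversion μ hR,
    ← integral_add hg.integrableOn ((integrableOn_ball_iff_inversion μ hR g).1 hg.integrableOn)]
  rfl

end Inversion

section MovingSpheres

variable {n : ℕ}

theorem sphereInversion_eq_inversion (x : EuclideanSpace ℝ (Fin n)) (l : ℝ)
    (ξ : EuclideanSpace ℝ (Fin n)) : sphereInversion x l ξ = inversion x l ξ := by
  simp only [sphereInversion, inversion, vsub_eq_sub, vadd_eq_add, dist_eq_norm, div_pow,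
    add_comm]

noncomputable def rieszIntegrand (s : ℝ) (F : EuclideanSpace ℝ (Fin n) → ℝ)
    (p y : EuclideanSpace ℝ (Fin n)) : ℝ :=
  ‖p - y‖ ^ (2 * s - (n : ℝ)) * F y

theorem ieG_eq_ieF_sub {s σ α ε : ℝ} (hσ : σ = ((n : ℝ) + 2 * s) / 2 - α * ((n : ℝ) - 2 * s) / 2)
    {u : EuclideanSpace ℝ (Fin n) → ℝ} {x z : EuclideanSpace ℝ (Fin n)} {l : ℝ} (hl : 0 < l)
    (hz : z ≠ x) (hu : 0 ≤ u (sphereInversion x l z)) :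
    ieG s σ α ε u x l z
      = ieF s σ α ε u z
        - (l / ‖z - x‖) ^ ((n : ℝ) + 2 * s) * ieF s σ α ε u (sphereInversion x l z) := by
  have hr : 0 < ‖z - x‖ := norm_sub_pos_iff.2 hz
  have hρ : 0 < l / ‖z - x‖ := div_pos hl hr
  set c := 1 + ‖sphereInversion x l z‖ ^ 2
  have hweight : ∀ e : ℝ, (2 * l ^ 2 / c) ^ e * ‖z - x‖ ^ (-(2 * e))
      = (l / ‖z - x‖) ^ (2 * e) * (2 / c) ^ e := fun e => by
    rw [Real.div_rpow hl.le hr.le, Real.rpow_neg hr.le, show 2 * l ^ 2 / c = 2 / c * l ^ 2 by ring,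
      Real.mul_rpow (by positivity) (by positivity), ← Real.rpow_natCast, ← Real.rpow_mul hl.le]
    push_cast
    ring
  have hkelvin : ∀ p : ℝ, ((l / ‖z - x‖) ^ ((n : ℝ) - 2 * s) * u (sphereInversion x l z)) ^ p
      = (l / ‖z - x‖) ^ (((n : ℝ) - 2 * s) * p) * u (sphereInversion x l z) ^ p := fun p => by
    rw [Real.mul_rpow (by positivity) hu, ← Real.rpow_mul hρ.le]
  have hexp : ∀ e p : ℝ, 2 * e + ((n : ℝ) - 2 * s) * p = (n : ℝ) + 2 * s →
      (l / ‖z - x‖) ^ (2 * e) * (l / ‖z - x‖) ^ (((n : ℝ) - 2 * s) * p)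
        = (l / ‖z - x‖) ^ ((n : ℝ) + 2 * s) := fun e p h => by
    rw [← Real.rpow_add hρ, h]
  have h₁ := hexp (2 * s) 1 (by ring)
  have h₂ := hexp σ α (by rw [hσ]; ring)
  rw [mul_one] at h₁
  simp only [ieG, ieF, kelvin]
  rw [show -(4 * s) = -(2 * (2 * s)) by ring]
  linear_combination
    (-ε * (l / ‖z - x‖) ^ ((n : ℝ) - 2 * s) * u (sphereInversion x l z)) * hweight (2 * s)
    - ε * (2 / c) ^ (2 * s) * u (sphereInversion x l z) * h₁
    - (l / ‖z - x‖) ^ (((n : ℝ) - 2 * s) * α) * u (sphereInversion x l z) ^ α * hweight σ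
    - (2 * l ^ 2 / c) ^ σ * ‖z - x‖ ^ (-(2 * σ)) * hkelvin α
    - (2 / c) ^ σ * u (sphereInversion x l z) ^ α * h₂

-- With `ρ = λ/|z - x|`, `β = λ/|ξ - x|`, `m = |ξ^{x,λ} - z|`, `t = |ξ - z|`, the distance formulas
-- of the inversion turn `jacobian_mul_riesz_inversion` into this identity.
theorem rpow_inversion_kernel_identity {ρ β m t : ℝ} (hρ : 0 < ρ) (hβ : 0 < β) (hm : 0 ≤ m)
    (ht : 0 ≤ t) (n : ℕ) (s : ℝ) :
    ρ ^ (2 * n) * ((ρ / β * m) ^ (2 * s - n) - β ^ ((n : ℝ) - 2 * s) * (β * ρ * t) ^ (2 * s - n))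
      = -(t ^ (2 * s - n) - β ^ ((n : ℝ) - 2 * s) * m ^ (2 * s - n)) * ρ ^ ((n : ℝ) + 2 * s) := by
  have hρ' : ρ ^ (2 * n) * ρ ^ (2 * s - n) = ρ ^ ((n : ℝ) + 2 * s) := by
    rw [← Real.rpow_natCast, ← Real.rpow_add hρ]
    push_cast
    ring_nf
  have hβ' : β ^ ((n : ℝ) - 2 * s) * β ^ (2 * s - n) = 1 := by
    rw [← Real.rpow_add hβ, sub_add_sub_cancel', sub_self, Real.rpow_zero]
  rw [Real.mul_rpow (div_pos hρ hβ).le hm, Real.mul_rpow (mul_pos hβ hρ).le ht,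
    Real.mul_rpow hβ.le hρ.le, Real.div_rpow hρ.le hβ.le, div_eq_mul_inv,
    ← eq_inv_of_mul_eq_one_left hβ']
  linear_combination (β ^ ((n : ℝ) - 2 * s) * m ^ (2 * s - n) - t ^ (2 * s - n)) * hρ'
    - t ^ (2 * s - n) * ρ ^ (2 * n) * ρ ^ (2 * s - n) * hβ'

theorem jacobian_mul_riesz_inversion {s l : ℝ} (hl : 0 < l) {x ξ z : EuclideanSpace ℝ (Fin n)}
    (hξ : ξ ≠ x) (hz : z ≠ x) :
    (l / ‖z - x‖) ^ (2 * n) * (‖ξ - inversion x l z‖ ^ (2 * s - n)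
        - (l / ‖ξ - x‖) ^ ((n : ℝ) - 2 * s) * ‖inversion x l ξ - inversion x l z‖ ^ (2 * s - n))
      = -msKernel s x l ξ z * (l / ‖z - x‖) ^ ((n : ℝ) + 2 * s) := by
  have hb : 0 < ‖ξ - x‖ := norm_sub_pos_iff.2 hξ
  have hr : 0 < ‖z - x‖ := norm_sub_pos_iff.2 hz
  have h₁ : ‖ξ - inversion x l z‖ = l / ‖z - x‖ / (l / ‖ξ - x‖) * ‖inversion x l ξ - z‖ := by
    have h := dist_inversion_mul_dist_center_eq (c := x) (R := l) hξ hz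
    simp only [dist_eq_norm] at h
    field_simp
    linarith
  have h₂ : ‖inversion x l ξ - inversion x l z‖ = l / ‖ξ - x‖ * (l / ‖z - x‖) * ‖ξ - z‖ := by
    rw [← dist_eq_norm, dist_inversion_inversion hξ hz, dist_eq_norm, dist_eq_norm, dist_eq_norm]
    ring
  rw [msKernel, sphereInversion_eq_inversion, neg_sub (n : ℝ), h₁, h₂]
  exact rpow_inversion_kernel_identity (div_pos hl hr) (div_pos hl hb)
    (norm_nonneg (inversion x l ξ - z)) (norm_nonneg (ξ - z)) n s

theorem inversionFold_rieszIntegrand_sub {s l : ℝ} (hl : 0 < l)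
    (F : EuclideanSpace ℝ (Fin n) → ℝ) {x ξ z : EuclideanSpace ℝ (Fin n)} (hξ : ξ ≠ x)
    (hz : z ≠ x) :
    inversionFold x l (rieszIntegrand s F ξ) z
        - (l / ‖ξ - x‖) ^ ((n : ℝ) - 2 * s)
          * inversionFold x l (rieszIntegrand s F (sphereInversion x l ξ)) z
      = msKernel s x l ξ z
        * (F z - (l / ‖z - x‖) ^ ((n : ℝ) + 2 * s) * F (sphereInversion x l z)) := by
  have hker := jacobian_mul_riesz_inversion (s := s) hl hξ hz
  have hK : msKernel s x l ξ z = ‖ξ - z‖ ^ (2 * s - n)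
      - (l / ‖ξ - x‖) ^ ((n : ℝ) - 2 * s) * ‖inversion x l ξ - z‖ ^ (2 * s - n) := by
    rw [msKernel, sphereInversion_eq_inversion, neg_sub]
  simp only [inversionFold, rieszIntegrand, finrank_euclideanSpace_fin,
    sphereInversion_eq_inversion]
  linear_combination F (inversion x l z) * hker - F z * hK

theorem IsIESolution.integrable_rieszIntegrand {s σ α ε γ : ℝ} {u : EuclideanSpace ℝ (Fin n) → ℝ}
    (hu : IsIESolution s σ α ε γ u) (p : EuclideanSpace ℝ (Fin n)) :
    Integrable (rieszIntegrand s (ieF s σ α ε u) p) :=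
  (hu.2.2 p).1

theorem IsIESolution.eq_setIntegral_inversionFold [Nontrivial (EuclideanSpace ℝ (Fin n))]
    {s σ α ε γ : ℝ} {u : EuclideanSpace ℝ (Fin n) → ℝ} (hu : IsIESolution s σ α ε γ u)
    {x : EuclideanSpace ℝ (Fin n)} {l : ℝ} (hl : 0 < l) (p : EuclideanSpace ℝ (Fin n)) :
    u p = γ * ∫ w in {w | l ≤ ‖w - x‖},
      inversionFold x l (rieszIntegrand s (ieF s σ α ε u) p) w := by
  rw [← integral_eq_setIntegral_inversionFold volume hl (hu.integrable_rieszIntegrand p)]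
  exact (hu.2.2 p).2

end MovingSpheres

theorem stmt_7_general (n : ℕ) (s α ε γ σ : ℝ)
    (hσ : σ = ((n : ℝ) + 2 * s) / 2 - α * ((n : ℝ) - 2 * s) / 2)
    (u : EuclideanSpace ℝ (Fin n) → ℝ) (hu : IsIESolution s σ α ε γ u)
    (x : EuclideanSpace ℝ (Fin n)) (l : ℝ) (hl : 0 < l)
    (ξ : EuclideanSpace ℝ (Fin n)) (hξ : l < ‖ξ - x‖) :
    IntegrableOn (fun z => msKernel s x l ξ z * ieG s σ α ε u x l z)
        {z : EuclideanSpace ℝ (Fin n) | l ≤ ‖z - x‖} ∧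
    u ξ - kelvin s u x l ξ
      = γ * ∫ z in {z : EuclideanSpace ℝ (Fin n) | l ≤ ‖z - x‖},
          msKernel s x l ξ z * ieG s σ α ε u x l z := by
  have hξx : ξ ≠ x := norm_sub_pos_iff.1 (hl.trans hξ)
  have : Nontrivial (EuclideanSpace ℝ (Fin n)) := ⟨ξ, x, hξx⟩
  set A := {z : EuclideanSpace ℝ (Fin n) | l ≤ ‖z - x‖}
  set ξ' := sphereInversion x l ξ
  set c := (l / ‖ξ - x‖) ^ ((n : ℝ) - 2 * s)
  set f := fun p => inversionFold x l (rieszIntegrand s (ieF s σ α ε u) p)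
  have hfold : ∀ z ∈ A, f ξ z - c * f ξ' z = msKernel s x l ξ z * ieG s σ α ε u x l z :=
    fun z hz => by
      rw [inversionFold_rieszIntegrand_sub hl _ hξx (norm_sub_pos_iff.1 (hl.trans_le hz)),
        ieG_eq_ieF_sub hσ hl (norm_sub_pos_iff.1 (hl.trans_le hz)) (hu.2.1 _).le]
  have hf : ∀ p, IntegrableOn (f p) A := fun p =>
    integrableOn_inversionFold volume hl (hu.integrable_rieszIntegrand p)
  have hA := measurableSet_setOf_le_norm_sub x l
  refine ⟨((hf ξ).sub ((hf ξ').const_mul c)).congr_fun hfold hA, ?_⟩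
  rw [← setIntegral_congr_fun hA hfold, integral_sub (hf ξ) ((hf ξ').const_mul c),
    integral_const_mul, kelvin, hu.eq_setIntegral_inversionFold hl ξ,
    hu.eq_setIntegral_inversionFold hl ξ']
  ring

/-- representation of `u − u_{x,λ}` via the moving-spheres kernel. -/
theorem stmt_7 (n : ℕ) (s α ε γ σ : ℝ)
    (hs : 0 < 2 * s) (hns : 2 * s < (n : ℝ))
    (hα : 0 < α) (hα' : α ≤ ((n : ℝ) + 2 * s) / ((n : ℝ) - 2 * s))
    (hε : 0 ≤ ε) (hγ : 0 < γ)
    (hσ : σ = ((n : ℝ) + 2 * s) / 2 - α * ((n : ℝ) - 2 * s) / 2)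
    (u : EuclideanSpace ℝ (Fin n) → ℝ) (hu : IsIESolution s σ α ε γ u)
    (x : EuclideanSpace ℝ (Fin n)) (l : ℝ) (hl : 0 < l)
    (ξ : EuclideanSpace ℝ (Fin n)) (hξ : l < ‖ξ - x‖) :
    IntegrableOn (fun z => msKernel s x l ξ z * ieG s σ α ε u x l z)
        {z : EuclideanSpace ℝ (Fin n) | l ≤ ‖z - x‖} ∧
    u ξ - kelvin s u x l ξ
      = γ * ∫ z in {z : EuclideanSpace ℝ (Fin n) | l ≤ ‖z - x‖},
          msKernel s x l ξ z * ieG s σ α ε u x l z :=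
  stmt_7_general n s α ε γ σ hσ u hu x l hl ξ hξ
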